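/- The HRC rule in Example (RAM violation): For X = {a,b,c} with LA attention index η given by η({a,b,c})=0.20, η({a,b})=0.30, η({a,c})=0.01, η({b,c})=0.10, η({a})=0.05, η({b})=0.05, η({c})=0.10, η(∅)=0.19, and preferences π placing probability 1/2 each on a≻₁b≻₁c and c≻₂b≻₂a, the induced stochastic choice rule satisfies p(a,{a,b,c}) > p(a,{a,c}) and p(b,{a,b,c}) > p(b,{b,c}). -/

import Mathlib

/-!
Adding `b` to `{a, c}` makes the heavy consideration sets `{a, b}` and `{a, b, c}` available, in
which `a` is the `≻₁`-best alternative, while the normalising mass only grows from `0.35` to `1`: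
`p(a, {a, b, c}) = (0.56 + 0.05) / 2 = 0.305` against `p(a, {a, c}) = (0.06 + 0.05) / 0.70 ≈ 0.157`.
Symmetrically `{a, b}` makes `b` the `≻₂`-best alternative:
`p(b, {a, b, c}) = (0.15 + 0.35) / 2 = 0.25` against `p(b, {b, c}) = (0.15 + 0.05) / 0.88 ≈ 0.227`.
-/

open Classical Finset

/-- The LA choice rule with fixed preference `r` and attention index `η`. -/
noncomputable def laChoice {X : Type*} [DecidableEq X]
    (η : Finset X → ℝ) (r : X → X → Prop) (x : X) (A : Finset X) : ℝ :=
  (∑ D ∈ A.powerset,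
      if x ∈ D ∧ ∀ y ∈ D, y ≠ x → r x y then η D else 0) /
    ∑ C ∈ A.powerset, η C

/-- The attention index of the RAM-violation example: `a = 0`, `b = 1`, `c = 2`. -/
noncomputable def ηEx : Finset (Fin 3) → ℝ := fun C =>
  if C = {0, 1, 2} then 0.20
  else if C = {0, 1} then 0.30
  else if C = {0, 2} then 0.01
  else if C = {1, 2} then 0.10
  else if C = {0} then 0.05
  else if C = {1} then 0.05
  else if C = {2} then 0.10
  else 0.19

/-- The LA-HRC rule with attention index `ηEx` and preferences placing
probability 1/2 each on `a ≻₁ b ≻₁ c` (i.e. `· < ·` on `Fin 3`) and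
`c ≻₂ b ≻₂ a` (i.e. `· > ·`). -/
noncomputable def pEx (x : Fin 3) (A : Finset (Fin 3)) : ℝ :=
  (1 / 2) * laChoice ηEx (· < ·) x A + (1 / 2) * laChoice ηEx (· > ·) x A

theorem Finset.sum_powerset_singleton {α β : Type*} [DecidableEq α] [AddCommMonoid β] (a : α)
    (f : Finset α → β) : ∑ t ∈ ({a} : Finset α).powerset, f t = f ∅ + f {a} := by
  rw [← insert_empty, sum_powerset_insert (notMem_empty a), powerset_empty, sum_singleton,
    sum_singleton]

lemma pEx_a_abc : pEx 0 {0, 1, 2} = 61 / 200 := by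
  norm_num +decide [pEx, laChoice, sum_powerset_insert, sum_powerset_singleton, ηEx]

lemma pEx_a_ac : pEx 0 {0, 2} = 11 / 70 := by
  norm_num +decide [pEx, laChoice, sum_powerset_insert, sum_powerset_singleton, ηEx]

lemma pEx_b_abc : pEx 1 {0, 1, 2} = 1 / 4 := by
  norm_num +decide [pEx, laChoice, sum_powerset_insert, sum_powerset_singleton, ηEx]

lemma pEx_b_bc : pEx 1 {1, 2} = 5 / 22 := by
  norm_num +decide [pEx, laChoice, sum_powerset_insert, sum_powerset_singleton, ηEx]

/-- The HRC rule of the example violates regularity twice: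
`p(a,{a,b,c}) > p(a,{a,c})` and `p(b,{a,b,c}) > p(b,{b,c})`, producing the
revealed-preference cycle that rules out a RAM representation. -/
theorem example_RAM_violation :
    pEx 0 ({0, 1, 2} : Finset (Fin 3)) > pEx 0 ({0, 2} : Finset (Fin 3)) ∧
    pEx 1 ({0, 1, 2} : Finset (Fin 3)) > pEx 1 ({1, 2} : Finset (Fin 3)) := by
  rw [pEx_a_abc, pEx_a_ac, pEx_b_abc, pEx_b_bc]
  norm_num
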